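/- arXiv:1902.07194 — 11 statements merged into one kernel-verified Lean document; each statement's English description precedes it below -/
import Mathlib

section
/- A nonempty subset A of a group G is 2-stable (there do not exist a1,a2,b1,b2 in G with a_i*b_j ∈ A iff i ≤ j) if and only if A is a left coset of a subgroup of G. -/
/-!
Writing `a₀b₀ = z`, `a₀b₁ = y`, `a₁b₁ = x` forces `a₁b₀ = x y⁻¹ z`, so `A` is 2-stable exactly when
it is closed under `(x, y, z) ↦ x y⁻¹ z`. For a nonempty such `A` and any `a ∈ A`, the translate
`a⁻¹ A` is closed under `(x, y) ↦ x y⁻¹`, hence a subgroup, and `A` is its left coset by `a`.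
-/

open Pointwise

/-- `A` is `k`-stable in `G` if there are no `a b : Fin k → G` with `a i * b j ∈ A ↔ i ≤ j`. -/
def IsKStable {G : Type*} [Group G] (k : ℕ) (A : Set G) : Prop :=
  ¬ ∃ a b : Fin k → G, ∀ i j : Fin k, a i * b j ∈ A ↔ i ≤ j

section

variable {G : Type*} [Group G]

def Set.MulInvMulClosed (A : Set G) : Prop :=
  ∀ x ∈ A, ∀ y ∈ A, ∀ z ∈ A, x * y⁻¹ * z ∈ A

theorem isKStable_two_iff_mulInvMulClosed (A : Set G) : IsKStable 2 A ↔ A.MulInvMulClosed := by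
  constructor
  · intro hst x hx y hy z hz
    by_contra hxyz
    refine hst ⟨![1, x * y⁻¹], ![z, y], fun i j => ?_⟩
    fin_cases i <;> fin_cases j <;> simp_all
  · rintro hA ⟨a, b, hab⟩
    have h := hA _ ((hab 1 1).2 le_rfl) _ ((hab 0 1).2 (by decide)) _ ((hab 0 0).2 le_rfl)
    rw [show a 1 * b 1 * (a 0 * b 1)⁻¹ * (a 0 * b 0) = a 1 * b 0 by group] at h
    exact absurd ((hab 1 0).1 h) (by decide)

theorem Subgroup.mulInvMulClosed_smul (g : G) (H : Subgroup G) :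
    (g • (H : Set G)).MulInvMulClosed := by
  rintro _ ⟨p, hp, rfl⟩ _ ⟨q, hq, rfl⟩ _ ⟨r, hr, rfl⟩
  refine ⟨p * q⁻¹ * r, H.mul_mem (H.mul_mem hp (H.inv_mem hq)) hr, ?_⟩
  simp only [smul_eq_mul]
  group

theorem Set.MulInvMulClosed.exists_eq_smul_subgroup {A : Set G} (hA : A.MulInvMulClosed)
    (hne : A.Nonempty) : ∃ (g : G) (H : Subgroup G), A = g • (H : Set G) := by
  obtain ⟨a, ha⟩ := hne
  have hdiv : ∀ x ∈ a⁻¹ • A, ∀ y ∈ a⁻¹ • A, x * y⁻¹ ∈ a⁻¹ • A := by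
    rintro _ ⟨p, hp, rfl⟩ _ ⟨q, hq, rfl⟩
    refine ⟨p * q⁻¹ * a, hA p hp q hq a ha, ?_⟩
    simp only [smul_eq_mul]
    group
  exact ⟨a, Subgroup.ofDiv (a⁻¹ • A) ⟨a⁻¹ * a, a, ha, rfl⟩ hdiv, (smul_inv_smul a A).symm⟩

end

theorem two_stable_iff_coset {G : Type*} [Group G] (A : Set G) (hA : A.Nonempty) :
    IsKStable 2 A ↔ ∃ (g : G) (H : Subgroup G), A = g • (H : Set G) := by
  rw [isKStable_two_iff_mulInvMulClosed]
  refine ⟨fun hclosed => hclosed.exists_eq_smul_subgroup hA, ?_⟩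
  rintro ⟨g, H, rfl⟩
  exact H.mulInvMulClosed_smul g
end

section
/- The collection of stable subsets of a group G is closed under finite intersections: if A, B ⊆ G are stable, then A ∩ B is stable. -/
/-!
Given `a i * b j ∈ A ∩ B ↔ i ≤ j`, colour each pair `j < i` by whether `a i * b j ∈ A`.
By Ramsey's theorem some subsequence is monochromatic. If these products avoid `A`, the
subsequence is a ladder for `A`; if they all lie in `A`, they must avoid `B`, and the
subsequence is a ladder for `B`.
-/

/-- `A` is stable in `G` if there are no sequences `a b : ℕ → G` with `a i * b j ∈ A ↔ i ≤ j`. -/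
def IsStable {G : Type*} [Group G] (A : Set G) : Prop :=
  ¬ ∃ a b : ℕ → G, ∀ i j : ℕ, a i * b j ∈ A ↔ i ≤ j

open Filter

theorem Filter.Eventually.exists_seq_forall_lt {α : Type*} {f : Filter α} [f.NeBot]
    {r : α → α → Prop} (h : ∀ᶠ i in f, ∀ᶠ j in f, r i j) :
    ∃ x : ℕ → α, ∀ m n, m < n → r (x m) (x n) := by
  obtain ⟨x, -, hx⟩ := exists_seq_of_forall_finset_exists (fun i => ∀ᶠ j in f, r i j) r
    fun s hs => (h.and ((eventually_all_finset s).2 hs)).exists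
  exact ⟨x, hx⟩

/-- Infinite Ramsey theorem for pairs, proved with a nonprincipal ultrafilter. -/
theorem Nat.exists_strictMono_forall_lt_or_forall_lt_not (r : ℕ → ℕ → Prop) :
    ∃ x : ℕ → ℕ, StrictMono x ∧
      ((∀ m n, m < n → r (x m) (x n)) ∨ ∀ m n, m < n → ¬ r (x m) (x n)) := by
  have homogeneous (p : ℕ → ℕ → Prop) (hp : ∀ᶠ i in hyperfilter ℕ, ∀ᶠ j in hyperfilter ℕ, p i j) :
      ∃ x : ℕ → ℕ, StrictMono x ∧ ∀ m n, m < n → p (x m) (x n) := by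
    have hp' : ∀ᶠ i in hyperfilter ℕ, ∀ᶠ j in hyperfilter ℕ, p i j ∧ i < j :=
      hp.mono fun i hi => hi.and ((eventually_gt_atTop i).filter_mono Nat.hyperfilter_le_atTop)
    obtain ⟨x, hx⟩ := hp'.exists_seq_forall_lt
    exact ⟨x, fun m n hmn => (hx m n hmn).2, fun m n hmn => (hx m n hmn).1⟩
  by_cases h : ∀ᶠ i in hyperfilter ℕ, ∀ᶠ j in hyperfilter ℕ, r i j
  · obtain ⟨x, hx, hr⟩ := homogeneous r h
    exact ⟨x, hx, .inl hr⟩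
  · have h' : ∀ᶠ i in hyperfilter ℕ, ∀ᶠ j in hyperfilter ℕ, ¬ r i j :=
      (Ultrafilter.eventually_not.2 h).mono fun _ hi => Ultrafilter.eventually_not.2 hi
    obtain ⟨x, hx, hr⟩ := homogeneous _ h'
    exact ⟨x, hx, .inr hr⟩

theorem exists_strictMono_ladder_of_ladder_and {R S : ℕ → ℕ → Prop}
    (h : ∀ i j, R i j ∧ S i j ↔ i ≤ j) :
    ∃ x : ℕ → ℕ, StrictMono x ∧
      ((∀ i j, R (x i) (x j) ↔ i ≤ j) ∨ ∀ i j, S (x i) (x j) ↔ i ≤ j) := by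
  obtain ⟨x, hx, hR | hR⟩ := Nat.exists_strictMono_forall_lt_or_forall_lt_not fun m n => R n m
  · refine ⟨x, hx, .inr fun i j => ⟨fun hS => ?_, fun hij => ((h _ _).2 (hx.monotone hij)).2⟩⟩
    by_contra hij
    have hji : j < i := not_le.1 hij
    exact (hx hji).not_ge ((h _ _).1 ⟨hR j i hji, hS⟩)
  · refine ⟨x, hx, .inl fun i j => ⟨fun hRij => ?_, fun hij => ((h _ _).2 (hx.monotone hij)).1⟩⟩
    by_contra hij
    exact hR j i (not_le.1 hij) hRij

theorem isStable_inter {G : Type*} [Group G] (A B : Set G)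
    (hA : IsStable A) (hB : IsStable B) : IsStable (A ∩ B) := by
  rintro ⟨a, b, hab⟩
  obtain ⟨x, -, hxA | hxB⟩ := exists_strictMono_ladder_of_ladder_and
    (R := fun i j => a i * b j ∈ A) (S := fun i j => a i * b j ∈ B) hab
  · exact hA ⟨a ∘ x, b ∘ x, hxA⟩
  · exact hB ⟨a ∘ x, b ∘ x, hxB⟩
end

section
/- Let G be a group and A ⊆ G generic and stable. Then there exists a finite set F ⊆ G such that for all infinite sets B, C ⊆ G, there exist g ∈ F and infinite subsets B' ⊆ B and C' ⊆ C with B'·C' ⊆ gA. -/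
open Pointwise

/-- `A` is generic in `G` if finitely many left translates of `A` cover `G`. -/
def IsGeneric {G : Type*} [Group G] (A : Set G) : Prop :=
  ∃ F : Finset G, ∀ x : G, ∃ g ∈ F, g⁻¹ * x ∈ A

/-- Pigeonhole: an infinite set of naturals has an infinite fiber under a map
to a finite type. -/
lemma my_pigeon {κ : Type*} [Finite κ] {S : Set ℕ} (hS : S.Infinite) (f : ℕ → κ) :
    ∃ k, {n | n ∈ S ∧ f n = k}.Infinite := by
  by_contra h
  push_neg at h
  have hsub : S ⊆ ⋃ k, {n | n ∈ S ∧ f n = k} := fun n hn => Set.mem_iUnion.2 ⟨f n, hn, rfl⟩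
  exact hS ((Set.finite_iUnion h).subset hsub)

lemma my_step_ex {κ : Type*} [Finite κ] (χ : ℕ → ℕ → κ) (S : Set ℕ) (hS : S.Infinite) :
    ∃ T : Set ℕ, T.Infinite ∧ T ⊆ S ∧ (∀ m ∈ T, sInf S < m) ∧
      ∀ m ∈ T, ∀ m' ∈ T, χ (sInf S) m = χ (sInf S) m' := by
  obtain ⟨k, hk⟩ := my_pigeon (hS.diff (Set.finite_Iic (sInf S))) (χ (sInf S))
  refine ⟨{n | n ∈ S \ Set.Iic (sInf S) ∧ χ (sInf S) n = k}, hk, ?_, ?_, ?_⟩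
  · exact fun n hn => hn.1.1
  · exact fun n hn => lt_of_not_ge (fun h => hn.1.2 h)
  · intro m hm m' hm'
    rw [hm.2, hm'.2]

/-- The decreasing chain of infinite sets used in the proof of Ramsey's theorem. -/
noncomputable def myChain {κ : Type*} [Finite κ] (χ : ℕ → ℕ → κ) :
    ℕ → {S : Set ℕ // S.Infinite}
  | 0 => ⟨Set.univ, Set.infinite_univ⟩
  | n + 1 => ⟨(my_step_ex χ _ (myChain χ n).2).choose,
      (my_step_ex χ _ (myChain χ n).2).choose_spec.1⟩

/-- Infinite Ramsey theorem for pairs with finitely many colors. -/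
lemma my_ramsey {κ : Type*} [Finite κ] (χ : ℕ → ℕ → κ) :
    ∃ e : ℕ → ℕ, StrictMono e ∧ ∃ k, ∀ i j, i < j → χ (e i) (e j) = k := by
  set a : ℕ → ℕ := fun n => sInf (myChain χ n).1 with ha
  have hmem : ∀ n, a n ∈ (myChain χ n).1 := fun n => Nat.sInf_mem (myChain χ n).2.nonempty
  have hsub : ∀ n, (myChain χ (n + 1)).1 ⊆ (myChain χ n).1 :=
    fun n => (my_step_ex χ _ (myChain χ n).2).choose_spec.2.1
  have hgt : ∀ n, ∀ m ∈ (myChain χ (n + 1)).1, a n < m :=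
    fun n => (my_step_ex χ _ (myChain χ n).2).choose_spec.2.2.1
  have hcol : ∀ n, ∀ m ∈ (myChain χ (n + 1)).1, ∀ m' ∈ (myChain χ (n + 1)).1,
      χ (a n) m = χ (a n) m' :=
    fun n => (my_step_ex χ _ (myChain χ n).2).choose_spec.2.2.2
  have hchain : ∀ i j, i ≤ j → (myChain χ j).1 ⊆ (myChain χ i).1 := by
    intro i j hij
    induction j with
    | zero => simp_all
    | succ j ih =>
      rcases Nat.lt_or_ge i (j + 1) with h | h
      · exact (hsub j).trans (ih (Nat.lt_succ_iff.1 h))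
      · have : i = j + 1 := le_antisymm hij h
        subst this; exact fun _ h => h
  have hamono : StrictMono a := by
    intro i j hij
    exact hgt i (a j) (hchain (i + 1) j hij (hmem j))
  have hconst : ∀ i j, i < j → χ (a i) (a j) = χ (a i) (a (i + 1)) := by
    intro i j hij
    exact hcol i (a j) (hchain (i + 1) j hij (hmem j)) (a (i + 1)) (hmem (i + 1))
  obtain ⟨k, hk⟩ := my_pigeon (Set.infinite_univ (α := ℕ))
    (fun n => χ (a n) (a (n + 1)))
  have hkinf : {n | χ (a n) (a (n + 1)) = k}.Infinite := by
    apply hk.mono; intro n hn; exact hn.2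
  set p : ℕ → Prop := fun n => χ (a n) (a (n + 1)) = k with hp
  refine ⟨fun t => a (Nat.nth p t), hamono.comp (Nat.nth_strictMono hkinf), k, ?_⟩
  intro i j hij
  rw [hconst _ _ ((Nat.nth_strictMono hkinf) hij)]
  exact Nat.nth_mem_of_infinite hkinf i

theorem generic_stable_sumset {G : Type*} [Group G] (A : Set G)
    (hgen : IsGeneric A) (hstab : IsStable A) :
    ∃ F : Finset G, ∀ B C : Set G, B.Infinite → C.Infinite →
      ∃ g ∈ F, ∃ B' C' : Set G, B' ⊆ B ∧ B'.Infinite ∧ C' ⊆ C ∧ C'.Infinite ∧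
        ∀ b ∈ B', ∀ c ∈ C', b * c ∈ g • A := by
  classical
  obtain ⟨F, hF⟩ := hgen
  refine ⟨F, fun B C hB hC => ?_⟩
  set x : ℕ → G := fun n => (Set.Infinite.natEmbedding B hB n).1 with hx
  set y : ℕ → G := fun n => (Set.Infinite.natEmbedding C hC n).1 with hy
  have hxB : ∀ n, x n ∈ B := fun n => (Set.Infinite.natEmbedding B hB n).2
  have hyC : ∀ n, y n ∈ C := fun n => (Set.Infinite.natEmbedding C hC n).2
  have hxinj : Function.Injective x := Subtype.coe_injective.comp (Set.Infinite.natEmbedding B hB).injective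
  have hyinj : Function.Injective y := Subtype.coe_injective.comp (Set.Infinite.natEmbedding C hC).injective
  set χ : ℕ → ℕ → Finset ↥F × Finset ↥F := fun i j =>
    (Finset.univ.filter (fun g : ↥F => x i * y j ∈ (g : G) • A),
     Finset.univ.filter (fun g : ↥F => x j * y i ∈ (g : G) • A)) with hχ
  obtain ⟨e, he, k, hk⟩ := my_ramsey χ
  have hmem1 : ∀ i j, i < j → ∀ g : ↥F, g ∈ k.1 ↔ x (e i) * y (e j) ∈ (g : G) • A := by
    intro i j hij g
    rw [← hk i j hij]
    simp [hχ]
  have hmem2 : ∀ i j, i < j → ∀ g : ↥F, g ∈ k.2 ↔ x (e j) * y (e i) ∈ (g : G) • A := by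
    intro i j hij g
    rw [← hk i j hij]
    simp [hχ]
  -- k.1 is nonempty by genericity
  obtain ⟨g₀, hg₀F, hg₀⟩ := hF (x (e 0) * y (e 1))
  have hg0mem : (⟨g₀, hg₀F⟩ : ↥F) ∈ k.1 := by
    rw [hmem1 0 1 (by norm_num)]
    rw [Set.mem_smul_set_iff_inv_smul_mem, smul_eq_mul]
    exact hg₀
  by_cases hcap : ∃ g : ↥F, g ∈ k.1 ∧ g ∈ k.2
  · obtain ⟨g, hg1, hg2⟩ := hcap
    refine ⟨(g : G), g.2, Set.range (fun t => x (e (2 * t))),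
      Set.range (fun t => y (e (2 * t + 1))), ?_, ?_, ?_, ?_, ?_⟩
    · rintro _ ⟨t, rfl⟩; exact hxB _
    · exact Set.infinite_range_of_injective
        (hxinj.comp (he.injective.comp (fun s t h => by omega)))
    · rintro _ ⟨t, rfl⟩; exact hyC _
    · exact Set.infinite_range_of_injective
        (hyinj.comp (he.injective.comp (fun s t h => by omega)))
    · rintro _ ⟨t, rfl⟩ _ ⟨u, rfl⟩
      rcases lt_or_gt_of_ne (show 2 * t ≠ 2 * u + 1 by omega) with h | h
      · exact (hmem1 _ _ h g).1 hg1
      · exact (hmem2 _ _ h g).1 hg2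
  · push_neg at hcap
    exfalso
    apply hstab
    refine ⟨fun i => (g₀ : G)⁻¹ * x (e (2 * i)), fun j => y (e (2 * j + 1)), ?_⟩
    intro i j
    have key : x (e (2 * i)) * y (e (2 * j + 1)) ∈ g₀ • A ↔ i ≤ j := by
      constructor
      · intro h
        by_contra hij
        have h2 : 2 * j + 1 < 2 * i := by omega
        exact hcap ⟨g₀, hg₀F⟩ hg0mem ((hmem2 _ _ h2 ⟨g₀, hg₀F⟩).2 h)
      · intro hij
        exact (hmem1 _ _ (by omega) ⟨g₀, hg₀F⟩).1 hg0mem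
    rw [mul_assoc, ← smul_eq_mul, ← Set.mem_smul_set_iff_inv_smul_mem]
    exact key
end

section
/- Let G be a group. There exist a generic subset A ⊆ ℤ (viewed additively) and infinite sets B, C ⊆ ℤ witnessing failure of the sumset property: specifically, with B = {2x : x ∈ ℤ, x ≥ 0}, C = {2x : x ∈ ℤ, x < 0}, and A = B ∪ (C+1), the set A is generic in (ℤ,+) but there are no infinite B' ⊆ B and C' ⊆ C and no t ∈ ℤ with B' + C' ⊆ A + t. -/
/-!
The set `A` consists of the integers whose sign matches their parity: the even ones are
`≥ 0` and the odd ones are `< 0`. It and its translate by `1` cover `ℤ`, since shifting by one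
flips parity and keeps the sign of every integer outside `A`. All elements of `B' + C'` are even,
so for even `t` every `b + c - t ∈ A` must be `≥ 0`, which fails for fixed `b` and `c → -∞`;
for odd `t` every `b + c - t` is odd, hence must be `< 0`, which fails for fixed `c` and `b → ∞`.
-/

/-- `A` is generic in `(ℤ,+)` if finitely many translates of `A` cover `ℤ`. -/
def IsGenericInt (A : Set ℤ) : Prop :=
  ∃ F : Finset ℤ, ∀ x : ℤ, ∃ t ∈ F, x - t ∈ A

def signParity : Set ℤ := {x | 0 ≤ x ↔ Even x}

lemma mem_signParity_iff {x : ℤ} : x ∈ signParity ↔ (0 ≤ x ↔ x % 2 = 0) := by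
  rw [signParity, Set.mem_ofPred_eq, Int.even_iff]

lemma isGenericInt_signParity : IsGenericInt signParity := by
  refine ⟨{0, 1}, fun x => ?_⟩
  by_cases hx : x ∈ signParity
  · exact ⟨0, by simp, by simpa using hx⟩
  · refine ⟨1, by simp, ?_⟩
    rw [mem_signParity_iff] at hx ⊢
    omega

lemma exists_add_sub_notMem_signParity {B C : Set ℤ} (hB : ∀ b ∈ B, Even b)
    (hC : ∀ c ∈ C, Even c) (hB_top : ¬BddAbove B) (hC_bot : ¬BddBelow C) (t : ℤ) :
    ∃ b ∈ B, ∃ c ∈ C, b + c - t ∉ signParity := by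
  rw [not_bddAbove_iff] at hB_top
  rw [not_bddBelow_iff] at hC_bot
  have h_even {b c : ℤ} (hb : b ∈ B) (hc : c ∈ C) : (b + c) % 2 = 0 :=
    Int.even_iff.1 ((hB b hb).add (hC c hc))
  rcases Int.even_or_odd t with ht | ht
  · obtain ⟨b, hb, -⟩ := hB_top 0
    obtain ⟨c, hc, hct⟩ := hC_bot (t - b)
    refine ⟨b, hb, c, hc, fun hmem => ?_⟩
    have := h_even hb hc
    rw [mem_signParity_iff] at hmem
    rw [Int.even_iff] at ht
    omega
  · obtain ⟨c, hc, -⟩ := hC_bot 0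
    obtain ⟨b, hb, hbt⟩ := hB_top (t - c)
    refine ⟨b, hb, c, hc, fun hmem => ?_⟩
    have := h_even hb hc
    rw [mem_signParity_iff] at hmem
    rw [Int.odd_iff] at ht
    omega

theorem sumset_fails_without_stability :
    let B : Set ℤ := {x | ∃ y : ℤ, 0 ≤ y ∧ x = 2 * y}
    let C : Set ℤ := {x | ∃ y : ℤ, y < 0 ∧ x = 2 * y}
    let A : Set ℤ := B ∪ {x | ∃ c ∈ C, x = c + 1}
    IsGenericInt A ∧
      ¬ ∃ (B' C' : Set ℤ) (t : ℤ), B' ⊆ B ∧ B'.Infinite ∧ C' ⊆ C ∧ C'.Infinite ∧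
        ∀ b ∈ B', ∀ c ∈ C', ∃ a ∈ A, b + c = a + t := by
  intro B C A
  have hA : A = signParity := by
    ext x
    simp only [A, B, C, Set.mem_union, Set.mem_ofPred_eq, mem_signParity_iff]
    constructor
    · rintro (⟨y, hy, rfl⟩ | ⟨-, ⟨y, hy, rfl⟩, rfl⟩) <;> omega
    · intro hx
      rcases Int.emod_two_eq_zero_or_one x with h | h
      · exact Or.inl ⟨x / 2, by omega, by omega⟩
      · exact Or.inr ⟨x - 1, ⟨(x - 1) / 2, by omega, by omega⟩, by omega⟩
  refine ⟨hA ▸ isGenericInt_signParity, ?_⟩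
  rintro ⟨B', C', t, hB', hB'_inf, hC', hC'_inf, hsum⟩
  have hB'_top : ¬BddAbove B' := fun h => hB'_inf <| BddBelow.finite_of_bddAbove
    ⟨0, fun b hb => by obtain ⟨y, hy, rfl⟩ := hB' hb; omega⟩ h
  have hC'_bot : ¬BddBelow C' := fun h => hC'_inf <| h.finite_of_bddAbove
    ⟨0, fun c hc => by obtain ⟨y, hy, rfl⟩ := hC' hc; omega⟩
  obtain ⟨b, hb, c, hc, hbc⟩ := exists_add_sub_notMem_signParity
    (fun b hb => by obtain ⟨y, -, rfl⟩ := hB' hb; exact even_two_mul y)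
    (fun c hc => by obtain ⟨y, -, rfl⟩ := hC' hc; exact even_two_mul y) hB'_top hC'_bot t
  obtain ⟨a, ha, hab⟩ := hsum b hb c hc
  rw [hA] at ha
  exact hbc (by rwa [hab, add_sub_cancel_right])
end

section
/- Let G be a group and suppose G = C_1 ∪ ... ∪ C_n where each C_i is a left coset of a subgroup H_i ≤ G. Let I be the set of indices i such that H_i has finite index in G. Then G = ⋃_{i∈I} C_i, and there exists i ∈ I with [G : H_i] ≤ |I|. -/
open Pointwise

theorem neumann_coset_covering {G : Type*} [Group G] (n : ℕ)
    (H : Fin n → Subgroup G) (g : Fin n → G)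
    (hcover : ∀ x : G, ∃ i : Fin n, x ∈ g i • (H i : Set G)) :
    (∀ x : G, ∃ i : Fin n, (H i).index ≠ 0 ∧ x ∈ g i • (H i : Set G)) ∧
      ∃ i : Fin n, (H i).index ≠ 0 ∧
        (H i).index ≤ Set.ncard {j : Fin n | (H j).index ≠ 0} := by
  classical
  set I := Finset.univ.filter fun i => (H i).FiniteIndex
  have hcovers : ⋃ i ∈ Finset.univ, g i • (H i : Set G) = Set.univ :=
    Set.eq_univ_of_forall fun x => by simpa using hcover x
  have hcoversI : ⋃ i ∈ I, g i • (H i : Set G) = Set.univ :=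
    Subgroup.leftCoset_cover_filter_FiniteIndex hcovers
  have hI : {j : Fin n | (H j).index ≠ 0} = I := by
    ext j
    simp [I, Subgroup.finiteIndex_iff]
  refine ⟨fun x => ?_, ?_⟩
  · have hx : x ∈ ⋃ i ∈ I, g i • (H i : Set G) := hcoversI ▸ Set.mem_univ x
    simpa [I, Subgroup.finiteIndex_iff] using hx
  · obtain ⟨i, -, hi, hle⟩ := Subgroup.exists_index_le_card_of_leftCoset_cover hcoversI
    exact ⟨i, hi.index_ne_zero, by rwa [hI, Set.ncard_coe_finset]⟩
end

section
/- Let G be a group, B a left-invariant Boolean algebra on G such that for every B-type p and A ∈ B the set dp(A) = {x ∈ G : x⁻¹A ∈ p} lies in B. Then for types p, q ∈ S(B), the set p∗q = {A ∈ B : dq(A) ∈ p} is again a B-type, and ∗ is an associative operation on S(B) satisfying g(p∗q) = (gp)∗q for all g ∈ G. -/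
open Pointwise

/-- `p` is a `B`-type. -/
def IsBType {G : Type*} (B : Set (Set G)) (p : Set (Set G)) : Prop :=
  p ⊆ B ∧ ∅ ∉ p ∧ (∀ A ∈ p, ∀ A' ∈ p, A ∩ A' ∈ p) ∧ ∀ A ∈ B, A ∈ p ∨ Aᶜ ∈ p

/-- The translate `gp = {gA : A ∈ p}`. -/
def typeSmul {G : Type*} [Group G] (g : G) (p : Set (Set G)) : Set (Set G) :=
  (fun A => g • A) '' p

/-- `dp(A) = {x ∈ G : x⁻¹A ∈ p}`. -/
def dSet {G : Type*} [Group G] (p : Set (Set G)) (A : Set G) : Set G :=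
  {x : G | x⁻¹ • A ∈ p}

/-- `p ∗ q = {A ∈ B : dq(A) ∈ p}`. -/
def typeStar {G : Type*} [Group G] (B : Set (Set G)) (p q : Set (Set G)) : Set (Set G) :=
  {A | A ∈ B ∧ dSet q A ∈ p}

/-! The whole proof rests on two identities for `d_q` on `B`: it is a Boolean algebra
homomorphism `B → B` (because `q` is an ultrafilter on `B` and `B` is translation invariant),
and it commutes with left translations. The first makes `p ∗ q` a type; with the identity
`d_{q ∗ r} = d_q ∘ d_r` it gives associativity, and the second gives equivariance. -/

namespace IsBType

variable {G : Type*} {B p : Set (Set G)}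

lemma mem_of_superset (hp : IsBType B p) {A A' : Set G} (hA : A ∈ p) (hA' : A' ∈ B)
    (hAA' : A ⊆ A') : A' ∈ p := by
  refine (hp.2.2.2 A' hA').resolve_right fun hc => hp.2.1 ?_
  simpa [← Set.sdiff_eq, Set.sdiff_eq_empty.mpr hAA'] using hp.2.2.1 A hA A'ᶜ hc

lemma compl_mem_iff (hp : IsBType B p) {A : Set G} (hA : A ∈ B) : Aᶜ ∈ p ↔ A ∉ p :=
  ⟨fun hc h => hp.2.1 (by simpa using hp.2.2.1 A h Aᶜ hc), (hp.2.2.2 A hA).resolve_left⟩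

lemma inter_mem_iff (hp : IsBType B p) {A A' : Set G} (hA : A ∈ B) (hA' : A' ∈ B) :
    A ∩ A' ∈ p ↔ A ∈ p ∧ A' ∈ p :=
  ⟨fun h => ⟨hp.mem_of_superset h hA Set.inter_subset_left,
    hp.mem_of_superset h hA' Set.inter_subset_right⟩, fun h => hp.2.2.1 A h.1 A' h.2⟩

end IsBType

section TypeOperations

variable {G : Type*} [Group G] {B : Set (Set G)}

lemma mem_typeSmul {g : G} {p : Set (Set G)} {A : Set G} :
    A ∈ typeSmul g p ↔ g⁻¹ • A ∈ p :=
  ⟨by rintro ⟨A, hA, rfl⟩; simpa using hA, fun h => ⟨g⁻¹ • A, h, smul_inv_smul g A⟩⟩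

lemma dSet_smul (q : Set (Set G)) (g : G) (A : Set G) : dSet q (g • A) = g • dSet q A := by
  ext x
  simp [dSet, Set.mem_smul_set_iff_inv_smul_mem, smul_smul]

lemma dSet_empty {q : Set (Set G)} (hq : IsBType B q) : dSet q ∅ = ∅ := by
  ext x
  simp [dSet, hq.2.1]

variable (hinv : ∀ (g : G), ∀ A ∈ B, g • A ∈ B)
include hinv

lemma smul_mem_iff_of_forall_smul_mem (g : G) (A : Set G) : g • A ∈ B ↔ A ∈ B :=
  ⟨fun h => by simpa using hinv g⁻¹ _ h, hinv g A⟩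

lemma dSet_typeStar (q r : Set (Set G)) {A : Set G} (hA : A ∈ B) :
    dSet (typeStar B q r) A = dSet q (dSet r A) := by
  ext x
  change x⁻¹ • A ∈ B ∧ dSet r (x⁻¹ • A) ∈ q ↔ x⁻¹ • dSet r A ∈ q
  rw [dSet_smul]
  simp [hinv _ A hA]

variable {q : Set (Set G)} (hq : IsBType B q)
include hq

lemma dSet_compl {A : Set G} (hA : A ∈ B) : dSet q Aᶜ = (dSet q A)ᶜ := by
  ext x
  simp only [dSet, Set.mem_ofPred_eq, Set.mem_compl_iff, Set.smul_set_compl]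
  exact hq.compl_mem_iff (hinv _ A hA)

lemma dSet_inter {A A' : Set G} (hA : A ∈ B) (hA' : A' ∈ B) :
    dSet q (A ∩ A') = dSet q A ∩ dSet q A' := by
  ext x
  simp only [dSet, Set.mem_ofPred_eq, Set.mem_inter_iff, Set.smul_set_inter]
  exact hq.inter_mem_iff (hinv _ A hA) (hinv _ A' hA')

end TypeOperations

section Star

variable {G : Type*} [Group G] {B : Set (Set G)}
  (hinv : ∀ (g : G), ∀ A ∈ B, g • A ∈ B)
include hinv

lemma isBType_typeStar (hcompl : ∀ A ∈ B, Aᶜ ∈ B) (hinter : ∀ A ∈ B, ∀ A' ∈ B, A ∩ A' ∈ B)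
    {p q : Set (Set G)} (hp : IsBType B p) (hq : IsBType B q) (hdq : ∀ A ∈ B, dSet q A ∈ B) :
    IsBType B (typeStar B p q) := by
  refine ⟨fun A hA => hA.1, fun h => hp.2.1 ?_, ?_, fun A hA => ?_⟩
  · simpa [dSet_empty hq] using h.2
  · rintro A ⟨hA, hAp⟩ A' ⟨hA', hA'p⟩
    exact ⟨hinter A hA A' hA', dSet_inter hinv hq hA hA' ▸ hp.2.2.1 _ hAp _ hA'p⟩
  · refine (hp.2.2.2 _ (hdq A hA)).imp (fun h => ⟨hA, h⟩) fun h => ⟨hcompl A hA, ?_⟩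
    rwa [dSet_compl hinv hq hA]

lemma typeStar_assoc (p q : Set (Set G)) {r : Set (Set G)} (hdr : ∀ A ∈ B, dSet r A ∈ B) :
    typeStar B p (typeStar B q r) = typeStar B (typeStar B p q) r := by
  ext A
  simp only [typeStar, Set.mem_ofPred_eq]
  constructor
  · rintro ⟨hA, h⟩
    exact ⟨hA, hdr A hA, dSet_typeStar hinv q r hA ▸ h⟩
  · rintro ⟨hA, -, h⟩
    exact ⟨hA, (dSet_typeStar hinv q r hA).symm ▸ h⟩

lemma typeSmul_typeStar (g : G) (p q : Set (Set G)) :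
    typeSmul g (typeStar B p q) = typeStar B (typeSmul g p) q := by
  ext A
  simp only [mem_typeSmul, typeStar, Set.mem_ofPred_eq, dSet_smul,
    smul_mem_iff_of_forall_smul_mem hinv]

end Star

theorem star_semigroup_general {G : Type*} [Group G] (B : Set (Set G))
    (hcompl : ∀ A ∈ B, Aᶜ ∈ B)
    (hinter : ∀ A ∈ B, ∀ A' ∈ B, A ∩ A' ∈ B)
    (hinv : ∀ (g : G), ∀ A ∈ B, g • A ∈ B)
    (hd : ∀ (p : Set (Set G)), IsBType B p → ∀ A ∈ B, dSet p A ∈ B) :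
    (∀ p q : Set (Set G), IsBType B p → IsBType B q → IsBType B (typeStar B p q)) ∧
      (∀ p q r : Set (Set G), IsBType B p → IsBType B q → IsBType B r →
        typeStar B p (typeStar B q r) = typeStar B (typeStar B p q) r) ∧
      ∀ (g : G) (p q : Set (Set G)), IsBType B p → IsBType B q →
        typeSmul g (typeStar B p q) = typeStar B (typeSmul g p) q :=
  ⟨fun _ q hp hq => isBType_typeStar hinv hcompl hinter hp hq (hd q hq),
    fun p q r _ _ hr => typeStar_assoc hinv p q (hd r hr),
    fun g p q _ _ => typeSmul_typeStar hinv g p q⟩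

theorem star_semigroup {G : Type*} [Group G] (B : Set (Set G))
    (huniv : Set.univ ∈ B) (hcompl : ∀ A ∈ B, Aᶜ ∈ B)
    (hinter : ∀ A ∈ B, ∀ A' ∈ B, A ∩ A' ∈ B)
    (hinv : ∀ (g : G), ∀ A ∈ B, g • A ∈ B)
    (hd : ∀ (p : Set (Set G)), IsBType B p → ∀ A ∈ B, dSet p A ∈ B) :
    (∀ p q : Set (Set G), IsBType B p → IsBType B q → IsBType B (typeStar B p q)) ∧
      (∀ p q r : Set (Set G), IsBType B p → IsBType B q → IsBType B r →
        typeStar B p (typeStar B q r) = typeStar B (typeStar B p q) r) ∧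
      ∀ (g : G) (p q : Set (Set G)), IsBType B p → IsBType B q →
        typeSmul g (typeStar B p q) = typeStar B (typeSmul g p) q :=
  star_semigroup_general B hcompl hinter hinv hd
end

section
/- Let G be a group, H ≤ G a finite-index subgroup, B a left-invariant Boolean algebra on G with H ∈ B, and suppose B is bi-invariant and carries the semigroup operation p∗q = {A ∈ B : {x : x⁻¹A ∈ q} ∈ p} on S(B). Then for types p, q ∈ S(B), the unique left coset of H in p∗q equals the unique left coset of H in p if and only if the unique left coset of H in q is H itself. Moreover, if H is normal in G, then the coset of H in p∗q equals the product (in G/H) of the cosets of H in p and in q. -/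
/-!
A type `q` containing the coset `bH` contains no other left coset of `H`, since two distinct
cosets are disjoint and `∅ ∉ q`. Hence `x ∈ dq(cH)` iff `x⁻¹cH = bH`, i.e. `dq(cH) = cHb⁻¹`.
So `aH ∈ p ∗ q` iff `aHb⁻¹ ∈ p`; as `aH ∈ p` too, the two sets meet, which forces `b ∈ H`, and
conversely `aHb⁻¹ = aH` when `b ∈ H`. If `H` is normal, `(ab)Hb⁻¹ = aH`.
-/

open Pointwise

namespace IsBType

variable {G : Type*} {B p : Set (Set G)}

theorem inter_nonempty (hp : IsBType B p) {A A' : Set G} (hA : A ∈ p) (hA' : A' ∈ p) :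
    (A ∩ A').Nonempty :=
  Set.nonempty_iff_ne_empty.2 fun h => hp.2.1 (h ▸ hp.2.2.1 A hA A' hA')

variable [Group G] {H : Subgroup G} {b : G}

theorem leftCoset_mem_iff (hp : IsBType B p) (hb : b • (H : Set G) ∈ p) (c : G) :
    c • (H : Set G) ∈ p ↔ c⁻¹ * b ∈ H := by
  refine ⟨fun hc => ?_, fun hcb => (leftCoset_eq_iff H).2 hcb ▸ hb⟩
  obtain ⟨x, hxc, hxb⟩ := hp.inter_nonempty hc hb
  rw [mem_leftCoset_iff] at hxc hxb
  simpa [mul_assoc] using H.mul_mem hxc (H.inv_mem hxb)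

theorem dSet_leftCoset (hp : IsBType B p) (hb : b • (H : Set G) ∈ p) (c : G) :
    dSet p (c • (H : Set G)) = {x | c⁻¹ * x * b ∈ H} := by
  ext x
  simp only [dSet, Set.mem_ofPred_eq, smul_smul, hp.leftCoset_mem_iff hb, mul_inv_rev, inv_inv]

end IsBType

theorem leftCoset_mem_typeStar_iff {G : Type*} [Group G] {B q : Set (Set G)} (p : Set (Set G))
    {H : Subgroup G} {b : G} (hq : IsBType B q) (hb : b • (H : Set G) ∈ q) {c : G}
    (hc : c • (H : Set G) ∈ B) :
    c • (H : Set G) ∈ typeStar B p q ↔ {x | c⁻¹ * x * b ∈ H} ∈ p := by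
  simp only [typeStar, Set.mem_ofPred_eq, hq.dSet_leftCoset hb, hc, true_and]

theorem star_cosets_general {G : Type*} [Group G] (B : Set (Set G))
    (hlinv : ∀ (g : G), ∀ A ∈ B, g • A ∈ B)
    (H : Subgroup G) (hHB : (H : Set G) ∈ B)
    (p q : Set (Set G)) (hp : IsBType B p) (hq : IsBType B q)
    (a b : G) (ha : a • (H : Set G) ∈ p) (hb : b • (H : Set G) ∈ q) :
    (a • (H : Set G) ∈ typeStar B p q ↔ b ∈ H) ∧
      (H.Normal → (a * b) • (H : Set G) ∈ typeStar B p q) := by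
  refine ⟨?_, fun hN => ?_⟩
  · rw [leftCoset_mem_typeStar_iff p hq hb (hlinv a _ hHB)]
    refine ⟨fun h => ?_, fun hbH => ?_⟩
    · obtain ⟨x, hx, hxb⟩ := hp.inter_nonempty ha h
      rw [mem_leftCoset_iff] at hx
      simpa [mul_assoc] using H.mul_mem (H.inv_mem hx) hxb
    · have hcoset : {x | a⁻¹ * x * b ∈ H} = a • (H : Set G) := by
        ext x
        simp [mem_leftCoset_iff, H.mul_mem_cancel_right hbH]
      rwa [hcoset]
  · rw [leftCoset_mem_typeStar_iff p hq hb (hlinv (a * b) _ hHB)]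
    have hcoset : {x | (a * b)⁻¹ * x * b ∈ H} = a • (H : Set G) := by
      ext x
      simp [mem_leftCoset_iff, mul_assoc, hN.mem_comm_iff]
    rwa [hcoset]

theorem star_cosets {G : Type*} [Group G] (B : Set (Set G))
    (huniv : Set.univ ∈ B) (hcompl : ∀ A ∈ B, Aᶜ ∈ B)
    (hinter : ∀ A ∈ B, ∀ A' ∈ B, A ∩ A' ∈ B)
    (hlinv : ∀ (g : G), ∀ A ∈ B, g • A ∈ B)
    (hrinv : ∀ A ∈ B, ∀ g : G, (fun a => a * g) '' A ∈ B)
    (hd : ∀ (p : Set (Set G)), IsBType B p → ∀ A ∈ B, dSet p A ∈ B)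
    (H : Subgroup G) (hHfi : H.index ≠ 0) (hHB : (H : Set G) ∈ B)
    (p q : Set (Set G)) (hp : IsBType B p) (hq : IsBType B q)
    (a b : G) (ha : a • (H : Set G) ∈ p) (hb : b • (H : Set G) ∈ q) :
    (a • (H : Set G) ∈ typeStar B p q ↔ b ∈ H) ∧
      (H.Normal → (a * b) • (H : Set G) ∈ typeStar B p q) :=
  star_cosets_general B hlinv H hHB p q hp hq a b ha hb
end

section
/- Let G be a group and B ⊆ P(G) a Boolean algebra. The following are equivalent: (i) B contains only finitely many finite-index subgroups of G; (ii) B contains a smallest finite-index subgroup of G; (iii) the intersection G⁰_B of all finite-index subgroups of G lying in B is itself a finite-index subgroup of G lying in B; (iv) G⁰_B has finite index in G. -/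
theorem finite_index_tfae {G : Type*} [Group G] (B : Set (Set G))
    (huniv : Set.univ ∈ B) (hcompl : ∀ A ∈ B, Aᶜ ∈ B)
    (hinter : ∀ A ∈ B, ∀ A' ∈ B, A ∩ A' ∈ B) :
    let G0 : Subgroup G := ⨅ (H : Subgroup G) (_ : (H : Set G) ∈ B ∧ H.index ≠ 0), H
    List.TFAE
      [ {H : Subgroup G | (H : Set G) ∈ B ∧ H.index ≠ 0}.Finite,
        ∃ H0 : Subgroup G, ((H0 : Set G) ∈ B ∧ H0.index ≠ 0) ∧
          ∀ H : Subgroup G, ((H : Set G) ∈ B ∧ H.index ≠ 0) → H0 ≤ H,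
        ((G0 : Set G) ∈ B ∧ G0.index ≠ 0),
        G0.index ≠ 0 ] := by
  intro G0
  set S : Set (Subgroup G) := {H : Subgroup G | (H : Set G) ∈ B ∧ H.index ≠ 0} with hS
  have hG0le : ∀ H ∈ S, G0 ≤ H := fun H hH => iInf_le_of_le H (iInf_le _ hH)
  tfae_have 1 → 3 := by
    intro hfin
    have hsub : Finite {H : Subgroup G // H ∈ S} := hfin
    have hiInf : G0 = ⨅ H : {H : Subgroup G // H ∈ S}, (H : Subgroup G) := by
      rw [iInf_subtype]; rfl
    constructor
    · -- G0 ∈ B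
      have key : ∀ T : Set (Set G), T.Finite → T ⊆ B → ⋂₀ T ∈ B := by
        intro T hT
        refine Set.Finite.induction_on (motive := fun t _ => t ⊆ B → ⋂₀ t ∈ B) T hT
          (fun _ => by simpa using huniv) ?_
        intro a t _ _ ih hsub
        rw [Set.sInter_insert]
        exact hinter a (hsub (Set.mem_insert a t)) _
          (ih fun x hx => hsub (Set.mem_insert_of_mem a hx))
      have hcoe : (G0 : Set G) = ⋂₀ ((fun H : Subgroup G => (H : Set G)) '' S) := by
        rw [Set.sInter_image]
        simp only [G0, Subgroup.coe_iInf]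
        rfl
      rw [hcoe]
      exact key _ (hfin.image _) (by rintro x ⟨H, hH, rfl⟩; exact hH.1)
    · -- finite index
      have : (⨅ H : {H : Subgroup G // H ∈ S}, (H : Subgroup G)).FiniteIndex :=
        Subgroup.finiteIndex_iInf fun H => ⟨H.2.2⟩
      rw [hiInf]
      exact this.index_ne_zero
  tfae_have 3 → 2 := fun h => ⟨G0, h, fun H hH => hG0le H hH⟩
  tfae_have 2 → 4 := by
    rintro ⟨H0, hH0, hmin⟩
    have h1 : H0 ≤ G0 := le_iInf fun H => le_iInf fun hH => hmin H hH
    intro h0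
    exact hH0.2 (Nat.eq_zero_of_zero_dvd (h0 ▸ Subgroup.index_dvd_of_le h1))
  tfae_have 4 → 1 := by
    intro h4
    have hquot : Finite (G ⧸ G0) := Nat.finite_of_card_ne_zero h4
    have : Finite (Set (G ⧸ G0)) := inferInstance
    refine Set.Finite.of_finite_image (f := fun H : Subgroup G =>
      (QuotientGroup.mk : G → G ⧸ G0) '' (H : Set G)) (Set.toFinite _) ?_
    intro H hH K hK himg
    have key : ∀ L ∈ S, (QuotientGroup.mk : G → G ⧸ G0) ⁻¹'
        ((QuotientGroup.mk : G → G ⧸ G0) '' (L : Set G)) = (L : Set G) := by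
      intro L hL
      ext x
      simp only [Set.mem_preimage, Set.mem_image, SetLike.mem_coe]
      constructor
      · rintro ⟨y, hy, hyx⟩
        have : y⁻¹ * x ∈ G0 := QuotientGroup.eq.mp hyx
        have hmem : y⁻¹ * x ∈ L := hG0le L hL this
        have := L.mul_mem hy hmem
        rwa [mul_inv_cancel_left] at this
      · intro hx
        exact ⟨x, hx, rfl⟩
    dsimp only at himg
    have : (H : Set G) = (K : Set G) := by
      rw [← key H hH, ← key K hK, himg]
    exact SetLike.coe_injective this
  tfae_finish
end

section
/- Let G be a group, H ≤ G a finite-index subgroup, and Y ⊆ G a union of left cosets of H. Then Y is k-stable for some k ≤ [G:H] + 1. -/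
open Pointwise

/-! If `a i * b j ∈ Y ↔ i ≤ j` and `b i`, `b j` lie in the same left coset of `H`, then so do
`a j * b i` and `a j * b j`; since `Y` is a union of left cosets, `a j * b j ∈ Y` forces
`a j * b i ∈ Y`, i.e. `j ≤ i`, and symmetrically `i ≤ j`. So the cosets of the `b i` are
pairwise distinct and a half-graph in `Y` has length at most `[G : H]`. -/

namespace Subgroup

variable {G : Type*} [Group G] {H : Subgroup G} {Y : Set G}

theorem mem_of_mk_eq_of_leftCoset_subset (hY : ∀ y ∈ Y, y • (H : Set G) ⊆ Y) {x x' : G}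
    (h : (x : G ⧸ H) = x') (hx : x ∈ Y) : x' ∈ Y :=
  hY x hx ((mem_leftCoset_iff x).2 (QuotientGroup.eq.1 h))

theorem injective_mk_of_halfGraph (hY : ∀ y ∈ Y, y • (H : Set G) ⊆ Y) {k : ℕ}
    {a b : Fin k → G} (hab : ∀ i j, a i * b j ∈ Y ↔ i ≤ j) :
    Function.Injective fun i => (b i : G ⧸ H) := by
  have le_of_mk_eq : ∀ i j, (b i : G ⧸ H) = b j → j ≤ i := fun i j h =>
    (hab j i).1 <| mem_of_mk_eq_of_leftCoset_subset hY
      (congrArg (a j • ·) h.symm) ((hab j j).2 le_rfl)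
  exact fun i j h => le_antisymm (le_of_mk_eq j i h.symm) (le_of_mk_eq i j h)

theorem isKStable_of_index_lt (hY : ∀ y ∈ Y, y • (H : Set G) ⊆ Y) (hH : H.index ≠ 0) {k : ℕ}
    (hk : H.index < k) : IsKStable k Y := by
  rintro ⟨a, b, hab⟩
  have : Finite (G ⧸ H) := finiteIndex_iff_finite_quotient.1 (finiteIndex_iff.2 hH)
  have := Nat.card_le_card_of_injective _ (injective_mk_of_halfGraph hY hab)
  rw [Nat.card_fin, ← index_eq_card] at this
  omega

end Subgroup

theorem coset_union_kStable {G : Type*} [Group G] (H : Subgroup G) (hH : H.index ≠ 0)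
    (Y : Set G) (hY : ∀ y ∈ Y, y • (H : Set G) ⊆ Y) :
    ∃ k ≤ H.index + 1, IsKStable k Y :=
  ⟨H.index + 1, le_rfl, Subgroup.isKStable_of_index_lt hY hH H.index.lt_succ_self⟩
end

section
/- There exists a subset A of (ℤ,+) that is stable but not k-stable for any k ≥ 1. Concretely, if for each n ≥ 1 one chooses an n-term arithmetic progression A_n ⊆ ℤ with common difference n such that min A_n > max A_{n-1} + n², then A = ⋃_{n≥1} A_n is stable but for every k there exist a_1,...,a_k, b_1,...,b_k ∈ ℤ with a_i + b_j ∈ A iff i ≤ j. -/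
/-!
Write `A_n = {s n + i n | i < n}`. The gaps between consecutive blocks put everything in `A`
outside `A_n` at distance more than `n²` from `s n`, so two distinct elements of `A`, one of them
in `A_n`, are at distance at least `n`. Hence for `d ≠ 0` only finitely many `x ∈ A` have
`x - d ∈ A`. If `a, b : ℕ → ℤ` witnessed instability, the `a 0 + b j` (`j ≥ 1`) would be pairwise
distinct and have this property with `d = a 0 - a 1 ≠ 0`, which is impossible. On the other hand,
within distance `k²` of `s k` the set `A` coincides with `A_k`, so `a i = -i k`, `b j = s k + j k`
is a `k`-configuration.
-/

/-- `A ⊆ ℤ` is additively stable if there are no sequences `a b : ℕ → ℤ` with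
`a i + b j ∈ A ↔ i ≤ j`. -/
def IsStableInt (A : Set ℤ) : Prop :=
  ¬ ∃ a b : ℕ → ℤ, ∀ i j : ℕ, a i + b j ∈ A ↔ i ≤ j

def apBlock (s : ℕ → ℤ) (n : ℕ) : Set ℤ :=
  {x : ℤ | ∃ i : ℕ, i < n ∧ x = s n + i * n}

def apUnion (s : ℕ → ℤ) : Set ℤ :=
  ⋃ n ∈ {n : ℕ | 1 ≤ n}, apBlock s n

def HasBlockGaps (s : ℕ → ℤ) : Prop :=
  ∀ n, ∀ x ∈ apBlock s n, x + (n + 1) ^ 2 < s (n + 1)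

section

variable {s : ℕ → ℤ}

lemma self_mem_apBlock {n : ℕ} (hn : 1 ≤ n) : s n ∈ apBlock s n :=
  ⟨0, hn, by simp⟩

lemma le_of_mem_apBlock {n : ℕ} {x : ℤ} (hx : x ∈ apBlock s n) : s n ≤ x := by
  obtain ⟨i, -, rfl⟩ := hx
  have : (0 : ℤ) ≤ i * n := by positivity
  linarith

lemma add_le_of_mem_apBlock {n : ℕ} {x : ℤ} (hx : x ∈ apBlock s n) :
    x + n ≤ s n + n ^ 2 := by
  obtain ⟨i, hi, rfl⟩ := hx
  have : (i : ℤ) + 1 ≤ n := by exact_mod_cast hi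
  nlinarith

lemma one_le_of_mem_apBlock {n : ℕ} {x : ℤ} (hx : x ∈ apBlock s n) : 1 ≤ n := by
  obtain ⟨i, hi, -⟩ := hx
  omega

lemma apBlock_finite (n : ℕ) : (apBlock s n).Finite :=
  ((Set.finite_Iio n).image fun i : ℕ => s n + i * n).subset
    (by rintro _ ⟨i, hi, rfl⟩; exact ⟨i, hi, rfl⟩)

lemma mem_apUnion {x : ℤ} : x ∈ apUnion s ↔ ∃ n, 1 ≤ n ∧ x ∈ apBlock s n := by
  simp [apUnion]

lemma hasBlockGaps_of_last_add_sq_lt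
    (hs : ∀ n : ℕ, 2 ≤ n → s (n - 1) + ((n : ℤ) - 2) * ((n : ℤ) - 1) + (n : ℤ) ^ 2 < s n) :
    HasBlockGaps s := by
  intro n x hx
  have h := hs (n + 1) (by linarith [one_le_of_mem_apBlock hx])
  simp only [Nat.add_sub_cancel] at h
  push_cast at h
  nlinarith [add_le_of_mem_apBlock hx]

lemma add_sq_lt_of_mem_apBlock_of_lt (hgap : HasBlockGaps s)
    {m n : ℕ} {x : ℤ} (hx : x ∈ apBlock s m) (hmn : m < n) : x + n ^ 2 < s n := by
  induction n, hmn using Nat.le_induction with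
  | base => exact_mod_cast hgap m x hx
  | succ n hmn ih =>
    have h := hgap n (s n) (self_mem_apBlock (by omega))
    push_cast
    nlinarith

lemma eq_of_mem_apBlock_of_abs_sub_lt
    (hgap : HasBlockGaps s)
    {m n : ℕ} {y : ℤ} (hn : 1 ≤ n) (hy : y ∈ apBlock s m) (hyn : |y - s n| < n ^ 2) :
    m = n := by
  rw [abs_lt] at hyn
  rcases lt_trichotomy m n with hmn | rfl | hnm
  · linarith [add_sq_lt_of_mem_apBlock_of_lt hgap hy hmn]
  · rfl
  · have h := add_sq_lt_of_mem_apBlock_of_lt hgap (self_mem_apBlock hn) hnm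
    have : (n : ℤ) ^ 2 ≤ (m : ℤ) ^ 2 := by gcongr
    linarith [le_of_mem_apBlock hy]

lemma le_abs_sub_of_mem_apBlock (hgap : HasBlockGaps s)
    {m n : ℕ} {x y : ℤ} (hx : x ∈ apBlock s n) (hy : y ∈ apBlock s m) (hxy : x ≠ y) :
    (n : ℤ) ≤ |x - y| := by
  by_contra! hlt
  have hn := one_le_of_mem_apBlock hx
  have hwindow : |y - s n| < n ^ 2 := by
    have := abs_sub_lt_iff.mp hlt
    rw [abs_lt]
    constructor <;> linarith [le_of_mem_apBlock hx, add_le_of_mem_apBlock hx]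
  obtain rfl := eq_of_mem_apBlock_of_abs_sub_lt hgap hn hy hwindow
  obtain ⟨i, -, rfl⟩ := hx
  obtain ⟨j, -, rfl⟩ := hy
  have hdvd : (m : ℤ) ∣ |s m + i * m - (s m + j * m)| :=
    (dvd_abs _ _).mpr ⟨i - j, by ring⟩
  exact hlt.not_ge (Int.le_of_dvd (abs_pos.mpr (sub_ne_zero.mpr hxy)) hdvd)

lemma finite_setOf_mem_apUnion_sub_mem
    (hgap : HasBlockGaps s) {d : ℤ} (hd : d ≠ 0) :
    {x | x ∈ apUnion s ∧ x - d ∈ apUnion s}.Finite := by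
  refine ((Set.finite_Iic d.natAbs).biUnion fun n _ => apBlock_finite (s := s) n).subset ?_
  rintro x ⟨hx, hxd⟩
  obtain ⟨n, -, hxn⟩ := mem_apUnion.mp hx
  obtain ⟨m, -, hxm⟩ := mem_apUnion.mp hxd
  have h := le_abs_sub_of_mem_apBlock hgap hxn hxm fun h => hd (by linarith)
  rw [sub_sub_cancel, Int.abs_eq_natAbs] at h
  exact Set.mem_biUnion (Set.mem_Iic.mpr (by exact_mod_cast h)) hxn

lemma isStableInt_apUnion (hgap : HasBlockGaps s) :
    IsStableInt (apUnion s) := by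
  rintro ⟨a, b, hab⟩
  have hd : a 0 - a 1 ≠ 0 := by
    intro h
    have h0 := (hab 0 0).mpr le_rfl
    rw [sub_eq_zero.mp h] at h0
    exact absurd ((hab 1 0).mp h0) (by norm_num)
  have hb : Function.Injective b := by
    intro j j' h
    have h₁ := (hab j' j).mp (h ▸ (hab j' j').mpr le_rfl)
    have h₂ := (hab j j').mp (h ▸ (hab j j).mpr le_rfl)
    omega
  apply Set.infinite_range_of_injective (f := fun j => a 0 + b (j + 1))
    (fun j j' h => Nat.succ_injective (hb (add_left_cancel h)))
  refine (finite_setOf_mem_apUnion_sub_mem hgap hd).subset ?_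
  rintro _ ⟨j, rfl⟩
  refine ⟨(hab 0 (j + 1)).mpr (Nat.zero_le _), ?_⟩
  rw [show a 0 + b (j + 1) - (a 0 - a 1) = a 1 + b (j + 1) by ring]
  exact (hab 1 (j + 1)).mpr (by omega)

lemma add_mul_mem_apUnion_iff (hgap : HasBlockGaps s)
    {k : ℕ} (hk : 1 ≤ k) {c : ℤ} (hc : |c| < k) : s k + c * k ∈ apUnion s ↔ 0 ≤ c := by
  rw [mem_apUnion]
  constructor
  · rintro ⟨m, -, hm⟩
    have hwindow : |s k + c * k - s k| < k ^ 2 := by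
      rw [add_sub_cancel_left, abs_mul, Nat.abs_cast, sq]
      exact mul_lt_mul_of_pos_right hc (by exact_mod_cast hk)
    obtain rfl := eq_of_mem_apBlock_of_abs_sub_lt hgap hk hm hwindow
    obtain ⟨i, -, hi⟩ := hm
    have hk0 : (m : ℤ) ≠ 0 := by exact_mod_cast (by omega : m ≠ 0)
    rw [mul_right_cancel₀ hk0 (add_left_cancel hi)]
    positivity
  · intro hc0
    refine ⟨k, hk, c.toNat, by have := abs_lt.mp hc; omega, ?_⟩
    rw [Int.toNat_of_nonneg hc0]

lemma exists_fin_config_apUnion (hgap : HasBlockGaps s) {k : ℕ} (hk : 1 ≤ k) :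
    ∃ a b : Fin k → ℤ, ∀ i j : Fin k, a i + b j ∈ apUnion s ↔ i ≤ j := by
  refine ⟨fun i => -i * k, fun j => s k + j * k, fun i j => ?_⟩
  have hc : |(j : ℤ) - i| < k := by
    rw [abs_lt]
    constructor <;> omega
  rw [show -(i : ℤ) * k + (s k + j * k) = s k + ((j : ℤ) - i) * k by ring,
    add_mul_mem_apUnion_iff hgap hk hc, sub_nonneg, Fin.le_def]
  exact_mod_cast Iff.rfl

end

theorem stable_not_kStable (s : ℕ → ℤ)
    (hs : ∀ n : ℕ, 2 ≤ n → s (n - 1) + ((n : ℤ) - 2) * ((n : ℤ) - 1) + (n : ℤ) ^ 2 < s n) :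
    let A : Set ℤ := ⋃ n ∈ {n : ℕ | 1 ≤ n}, {x : ℤ | ∃ i : ℕ, i < n ∧ x = s n + i * n}
    IsStableInt A ∧
      ∀ k : ℕ, 1 ≤ k → ∃ a b : Fin k → ℤ, ∀ i j : Fin k, a i + b j ∈ A ↔ i ≤ j := by
  have hgap := hasBlockGaps_of_last_add_sq_lt hs
  exact ⟨isStableInt_apUnion hgap, fun k hk => exists_fin_config_apUnion hgap hk⟩
end

section
/- Let G = Sym(ℕ) and H = {σ ∈ G : σ(0) = 0}. Then the relation φ(x,y) := "x ∈ yH" is 2-stable, but the relation φ#(x;y,z) := "xz ∈ yH" is unstable: there exist sequences (a_i)_{i≥1} and (b_i)_{i≥1} in G with b_j ∈ a_i H a_i if and only if j ≥ i. -/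
private def fpc (j k : ℕ) : ℕ :=
  if k ≤ j then k else if (k - j) % 2 = 1 then k + 1 else k - 1

private lemma fpc_inv (j : ℕ) : Function.Involutive (fpc j) := by
  intro k
  unfold fpc
  rcases le_or_gt k j with h | h
  · simp [h]
  · rcases Nat.even_or_odd (k - j) with he | ho
    · rw [Nat.even_iff] at he
      have h1 : ¬ k ≤ j := by omega
      have h2 : (k - j) % 2 ≠ 1 := by omega
      have h3 : ¬ k - 1 ≤ j := by omega
      have h4 : (k - 1 - j) % 2 = 1 := by omega
      simp [h1, h2, h3, h4]
      omega
    · rw [Nat.odd_iff] at ho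
      have h1 : ¬ k ≤ j := by omega
      have h3 : ¬ k + 1 ≤ j := by omega
      have h4 : (k + 1 - j) % 2 ≠ 1 := by omega
      simp [h1, ho, h3, h4]

private def bperm (j : ℕ) : Equiv.Perm ℕ := Function.Involutive.toPerm _ (fpc_inv j)

private lemma bperm_apply (j k : ℕ) : bperm j k = fpc j k := rfl

theorem perm_conjugate_unstable :
    let G := Equiv.Perm ℕ
    let H : Set G := {σ : G | σ 0 = 0}
    (¬ ∃ a b : Fin 2 → G, ∀ i j : Fin 2, (b j)⁻¹ * a i ∈ H ↔ i ≤ j) ∧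
      ∃ a b : ℕ → G, ∀ i j : ℕ, 1 ≤ i → 1 ≤ j →
        ((∃ h ∈ H, b j = a i * h * a i) ↔ i ≤ j) := by
  intro G H
  have conv : ∀ x y : G, (y⁻¹ * x ∈ H) ↔ x 0 = y 0 := by
    intro x y
    show y⁻¹ (x 0) = 0 ↔ x 0 = y 0
    rw [Equiv.Perm.inv_eq_iff_eq]
  constructor
  · rintro ⟨a, b, hab⟩
    have h00 : a 0 0 = b 0 0 := (conv _ _).mp ((hab 0 0).mpr (le_refl 0))
    have h01 : a 0 0 = b 1 0 := (conv _ _).mp ((hab 0 1).mpr (by decide))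
    have h11 : a 1 0 = b 1 0 := (conv _ _).mp ((hab 1 1).mpr (le_refl 1))
    have h10 : (1 : Fin 2) ≤ 0 := (hab 1 0).mp ((conv _ _).mpr (by rw [h11, ← h01, h00]))
    exact absurd h10 (by decide)
  · refine ⟨fun i => Equiv.swap 0 i, fun j => bperm j, fun i j hi hj => ?_⟩
    have hfix : ∀ k, k ≤ j → fpc j k = k := fun k hk => by simp [fpc, hk]
    have hmove : ∀ k, j < k → fpc j k ≠ k := by
      intro k hk
      unfold fpc
      have h1 : ¬ k ≤ j := by omega
      simp [h1]
      split <;> omega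
    constructor
    · rintro ⟨h, hH, hbj⟩
      by_contra hij
      push_neg at hij
      have hbj' : bperm j = Equiv.swap 0 i * h * Equiv.swap 0 i := hbj
      have hH' : h 0 = 0 := hH
      have : bperm j i = i := by
        rw [hbj']
        show Equiv.swap 0 i (h (Equiv.swap 0 i i)) = i
        rw [Equiv.swap_apply_right, hH', Equiv.swap_apply_left]
      rw [bperm_apply] at this
      exact hmove i (by omega) this
    · intro hij
      refine ⟨Equiv.swap 0 i * bperm j * Equiv.swap 0 i, ?_, ?_⟩
      · show (Equiv.swap 0 i * bperm j * Equiv.swap 0 i) 0 = 0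
        show Equiv.swap 0 i (bperm j (Equiv.swap 0 i 0)) = 0
        rw [Equiv.swap_apply_left, bperm_apply, hfix i hij, Equiv.swap_apply_right]
      · rw [← mul_assoc, ← mul_assoc, Equiv.swap_mul_self, one_mul, mul_assoc,
          Equiv.swap_mul_self, mul_one]
end
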